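/- arXiv:2101.02278 — 4 statements merged into one kernel-verified Lean document; each statement's English description precedes it below -/
import Mathlib

section
/- Let $y \in \mathbb{R}_+^m$ be a vector of nonnegative reals such that for every subset $S \subseteq [m]$ of size $n$, $\prod_{j \in S} y_j \geq 1$. Let $a_{ij} \geq 0$ for $i \in [n]$, $j \in [m]$ be such that for each $j$, at most one $i$ has $a_{ij} > 0$ (i.e., $a_{ij} a_{i'j} = 0$ whenever $i \neq i'$). Then $\prod_{i=1}^n \sum_{j=1}^m a_{ij} y_j \geq \prod_{i=1}^n \sum_{j=1}^m a_{ij}$. -/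
/-- If `y j ≥ 0` with `∏_{j ∈ S} y j ≥ 1` for every `S` of size `n`,
and `a i j ≥ 0` with at most one nonzero entry per column, then
`∏ i, ∑ j, a i j * y j ≥ ∏ i, ∑ j, a i j`. -/
theorem stmt0 (n m : ℕ) (hnm : n ≤ m) (y : Fin m → ℝ) (hy : ∀ j, 0 ≤ y j)
    (hyS : ∀ S : Finset (Fin m), S.card = n → 1 ≤ ∏ j ∈ S, y j)
    (a : Fin n → Fin m → ℝ) (ha : ∀ i j, 0 ≤ a i j)
    (hdisj : ∀ i i' j, i ≠ i' → a i j * a i' j = 0) :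
    ∏ i, ∑ j, a i j ≤ ∏ i, ∑ j, a i j * y j := by
  rw [Finset.prod_univ_sum, Finset.prod_univ_sum]
  apply Finset.sum_le_sum
  intro g _
  by_cases hg : Function.Injective g
  · rw [Finset.prod_mul_distrib]
    have hprod : 1 ≤ ∏ i, y (g i) := by
      rw [← Finset.prod_image (fun x _ y _ h => hg h)]
      apply hyS
      rw [Finset.card_image_of_injective _ hg, Finset.card_univ, Fintype.card_fin]
    exact le_mul_of_one_le_right (Finset.prod_nonneg fun i _ => ha i (g i)) hprod
  · obtain ⟨i, i', hgi, hne⟩ : ∃ i i', g i = g i' ∧ i ≠ i' := by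
      simp only [Function.Injective, not_forall] at hg
      obtain ⟨i, i', h1, h2⟩ := hg
      exact ⟨i, i', h1, h2⟩
    have h0 : a i (g i) = 0 ∨ a i' (g i') = 0 := by
      have := hdisj i i' (g i) hne
      rcases mul_eq_zero.mp this with h | h
      · exact Or.inl h
      · exact Or.inr (hgi ▸ h)
    have hz : ∏ i, a i (g i) = 0 := by
      rcases h0 with h | h
      · exact Finset.prod_eq_zero (Finset.mem_univ i) h
      · exact Finset.prod_eq_zero (Finset.mem_univ i') h
    rw [hz]
    exact Finset.prod_nonneg fun i _ => mul_nonneg (ha i (g i)) (hy (g i))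
end

section
/- For real numbers $x_1, \ldots, x_n \in [0,1]$ with $\sum_{i=1}^n x_i \leq 1$, it holds that $1 - \prod_{i=1}^n (1 - x_i) \geq \left(1 - \frac{1}{e}\right) \sum_{i=1}^n x_i$. -/
/-- for `x i ∈ [0,1]` with `∑ x i ≤ 1`,
`1 - ∏ (1 - x i) ≥ (1 - 1/e) * ∑ x i`. -/
theorem stmt5 (n : ℕ) (x : Fin n → ℝ) (hx0 : ∀ i, 0 ≤ x i) (hx1 : ∀ i, x i ≤ 1)
    (hsum : ∑ i, x i ≤ 1) :
    (1 - 1 / Real.exp 1) * ∑ i, x i ≤ 1 - ∏ i, (1 - x i) := by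
  set s := ∑ i, x i with hs
  have hs0 : 0 ≤ s := Finset.sum_nonneg fun i _ => hx0 i
  have hprod : ∏ i, (1 - x i) ≤ Real.exp (-s) := by
    rw [hs, ← Finset.sum_neg_distrib, Real.exp_sum]
    exact Finset.prod_le_prod (fun i _ => by linarith [hx1 i])
      (fun i _ => by linarith [Real.add_one_le_exp (-x i)])
  have hconv : Real.exp (-s) ≤ (1 - s) * Real.exp 0 + s * Real.exp (-1) := by
    have := convexOn_exp.2 (Set.mem_univ (0:ℝ)) (Set.mem_univ (-1:ℝ))
      (by linarith : (0:ℝ) ≤ 1 - s) hs0 (by ring)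
    simpa [smul_eq_mul, mul_comm] using this
  have hkey : Real.exp (-s) ≤ 1 - s + s / Real.exp 1 := by
    have h1 : s * Real.exp (-1) = s / Real.exp 1 := by
      rw [Real.exp_neg]; field_simp
    rw [Real.exp_zero, h1] at hconv
    linarith
  have hring : (1 - 1 / Real.exp 1) * s = s - s / Real.exp 1 := by ring
  linarith [hkey, hprod]
end

section
/- Let $x \in \{0,1\}^{n \times m}$ satisfy $\sum_{i=1}^n x_{ij} \leq 1$ for all $j$ (an allocation), and let $w_{ij} \geq 0$. Then for every $y \in \mathbb{R}_{>0}^m$ satisfying $\prod_{j \in S} y_j \geq 1$ for all $S \in \binom{[m]}{n}$, $\prod_{i=1}^n \left(\sum_{j=1}^m w_{ij} x_{ij} y_j\right) \geq \prod_{i=1}^n \left(\sum_{j=1}^m w_{ij} x_{ij}\right)$. -/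
/-- for an integral allocation `x` (each item to at most one agent) and
any `y > 0` with `∏_{j ∈ S} y j ≥ 1` for all `n`-subsets `S`,
`∏ i, ∑ j, w i j * x i j * y j ≥ ∏ i, ∑ j, w i j * x i j`. -/
theorem stmt14 (n m : ℕ) (x : Fin n → Fin m → ℝ)
    (hx01 : ∀ i j, x i j = 0 ∨ x i j = 1)
    (halloc : ∀ j, ∑ i, x i j ≤ 1)
    (w : Fin n → Fin m → ℝ) (hw : ∀ i j, 0 ≤ w i j)
    (y : Fin m → ℝ) (hy : ∀ j, 0 < y j)
    (hyS : ∀ S : Finset (Fin m), S.card = n → 1 ≤ ∏ j ∈ S, y j) :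
    ∏ i, ∑ j, w i j * x i j ≤ ∏ i, ∑ j, w i j * x i j * y j := by
  have hxnn : ∀ i j, 0 ≤ x i j := by
    intro i j; rcases hx01 i j with h | h <;> simp [h]
  rw [Finset.prod_univ_sum (fun _ => Finset.univ) (fun i j => w i j * x i j),
      Finset.prod_univ_sum (fun _ => Finset.univ) (fun i j => w i j * x i j * y j)]
  apply Finset.sum_le_sum
  intro g _
  by_cases hall : ∀ i, x i (g i) = 1
  · -- g is injective
    have hginj : Function.Injective g := by
      intro i1 i2 h12
      by_contra hne
      have h2 : (2 : ℝ) ≤ ∑ i, x i (g i1) := by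
        have := Finset.add_sum_erase Finset.univ (fun i => x i (g i1))
          (Finset.mem_univ i1)
        rw [← this]
        have h2' : x i2 (g i1) ≤ ∑ i ∈ Finset.univ.erase i1, x i (g i1) :=
          Finset.single_le_sum (fun i _ => hxnn i (g i1))
            (Finset.mem_erase.2 ⟨fun h => hne h.symm, Finset.mem_univ i2⟩)
        have := hall i1
        have := hall i2
        rw [← h12] at this
        linarith
      linarith [halloc (g i1)]
    have hcard : (Finset.univ.image g).card = n := by
      rw [Finset.card_image_of_injective _ hginj, Finset.card_univ, Fintype.card_fin]
    have hyprod : 1 ≤ ∏ i, y (g i) := by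
      have := hyS (Finset.univ.image g) hcard
      rwa [Finset.prod_image (fun a _ b _ h => hginj h)] at this
    calc ∏ i, w i (g i) * x i (g i)
        ≤ (∏ i, w i (g i) * x i (g i)) * ∏ i, y (g i) :=
          le_mul_of_one_le_right
            (Finset.prod_nonneg fun i _ => mul_nonneg (hw i (g i)) (hxnn i (g i)))
            hyprod
      _ = ∏ i, w i (g i) * x i (g i) * y (g i) := by
          rw [← Finset.prod_mul_distrib]
  · push_neg at hall
    obtain ⟨i0, hi0⟩ := hall
    have hx0 : x i0 (g i0) = 0 := (hx01 i0 (g i0)).resolve_right hi0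
    have : ∏ i, w i (g i) * x i (g i) = 0 :=
      Finset.prod_eq_zero (Finset.mem_univ i0) (by simp [hx0])
    rw [this]
    exact Finset.prod_nonneg fun i _ =>
      mul_nonneg (mul_nonneg (hw i (g i)) (hxnn i (g i))) (hy (g i)).le
end

section
/- Let $X_{ij}$, $(i,j) \in [n]\times[m]$, be independent Bernoulli random variables with $\Pr[X_{ij}=1] = x_{ij}$, and let $j_1, \ldots, j_n \in [m]$ be distinct. Suppose for each $i$ there are random variables $Y_i, Z_i \in \{0,1\}$ (defined on an extension of the probability space with additional independent randomness) such that: (a) $Y_i Z_i \leq X_{i j_i}$; (b) conditioned on the event $\mathcal{X} = \{X_{1 j_1} = \cdots = X_{n j_n} = 1\}$, $\mathbb{E}[Y_i \mid X] = \pi_i(X)$ and $\mathbb{E}[Z_i \mid X] = \sigma_i(X)$ where $\pi_i, \sigma_i$ are non-increasing functions of the variables $\{X_{ij} : j \neq j_i\}$ and the extra randomness in each $Y_i$ (resp. $Z_i$) is independent across $i$ and independent of everything else; (c) $\mathbb{E}[Y_i \mid \mathcal{X}] \geq c$ and $\mathbb{E}[Z_i \mid \mathcal{X}] \geq c$ for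 some $c \in [0,1]$. Then $\mathbb{E}\left[\prod_{i=1}^n Y_i Z_i\right] \geq c^{2n} \prod_{i=1}^n x_{i j_i}$. -/
set_option maxHeartbeats 1000000

open Finset

lemma fkg_antitone {α : Type*} [DistribLattice α] [Fintype α] (μ f g : α → ℝ)
    (hμ₀ : 0 ≤ μ) (hf₀ : 0 ≤ f) (hg₀ : 0 ≤ g) (hf : Antitone f) (hg : Antitone g)
    (hμ : ∀ a b, μ a * μ b ≤ μ (a ⊓ b) * μ (a ⊔ b)) :
    (∑ a, μ a * f a) * ∑ a, μ a * g a ≤ (∑ a, μ a) * ∑ a, μ a * (f a * g a) := by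
  exact fkg (α := αᵒᵈ) (f := fun a => f (OrderDual.ofDual a))
    (g := fun a => g (OrderDual.ofDual a)) (μ := fun a => μ (OrderDual.ofDual a))
    (fun a => hμ₀ _) (fun a => hf₀ _) (fun a => hg₀ _)
    (fun a b hab => hf hab) (fun a b hab => hg hab)
    (fun a b =>
      (hμ (OrderDual.ofDual a) (OrderDual.ofDual b)).trans (le_of_eq (mul_comm _ _)))

lemma fkg_prod {α : Type*} [DistribLattice α] [Fintype α] {ι : Type*} [DecidableEq ι]
    (μ : α → ℝ) (hμ₀ : ∀ a, 0 ≤ μ a)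
    (hμ : ∀ a b, μ a * μ b ≤ μ (a ⊓ b) * μ (a ⊔ b))
    (T c : ℝ) (hT : ∑ a, μ a = T) (hTpos : 0 < T) (hc0 : 0 ≤ c)
    (f : ι → α → ℝ) (hf0 : ∀ k a, 0 ≤ f k a) (hfa : ∀ k, Antitone (f k))
    (hfc : ∀ k, c * T ≤ ∑ a, μ a * f k a) :
    ∀ s : Finset ι, c ^ s.card * T ≤ ∑ a, μ a * ∏ k ∈ s, f k a := by
  intro s
  induction s using Finset.induction_on with
  | empty => simp [hT]
  | @insert k s hk ih =>
    have hgnn : ∀ a, 0 ≤ ∏ k ∈ s, f k a := fun a => Finset.prod_nonneg fun k _ => hf0 k a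
    have hganti : Antitone (fun a => ∏ k ∈ s, f k a) := by
      intro a b hab
      exact Finset.prod_le_prod (fun k _ => hf0 k b) (fun k _ => hfa k hab)
    have key := fkg_antitone μ (f k) (fun a => ∏ k ∈ s, f k a)
      (fun a => hμ₀ a) (fun a => hf0 k a) hgnn (hfa k) hganti hμ
    rw [hT] at key
    have h1 : (c * T) * (c ^ s.card * T) ≤ (∑ a, μ a * f k a) * ∑ a, μ a * ∏ k ∈ s, f k a :=
      mul_le_mul (hfc k) ih (by positivity) (le_trans (by positivity) (hfc k))
    have h2 : (c * T) * (c ^ s.card * T) ≤ T * ∑ a, μ a * (f k a * ∏ k ∈ s, f k a) :=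
      h1.trans key
    rw [Finset.card_insert_of_notMem hk]
    simp only [Finset.prod_insert hk] at h2 ⊢
    rw [pow_succ]
    have h3 : (c ^ s.card * c * T) * T ≤ (∑ a, μ a * (f k a * ∏ k ∈ s, f k a)) * T := by
      nlinarith [h2]
    exact le_of_mul_le_mul_right h3 hTpos

lemma bool_weight_mul (u v : Bool) (r s : ℝ) :
    (if u = true then r else s) * (if v = true then r else s) =
    (if (u ⊓ v) = true then r else s) * (if (u ⊔ v) = true then r else s) := by
  cases u <;> cases v <;> simp [mul_comm]

lemma sum_pi_fun {κ A : Type*} [Fintype κ] [DecidableEq κ] [Fintype A] (h : κ → A → ℝ) :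
    ∑ v : κ → A, ∏ q, h q (v q) = ∏ q, ∑ a, h q a := by
  rw [← Fintype.piFinset_univ, ← Finset.prod_univ_sum]

lemma sum_pi_bool {κ : Type*} [Fintype κ] [DecidableEq κ] (g : κ → Bool → ℝ) :
    ∑ v : κ → Bool, ∏ q, g q (v q) = ∏ q, (g q true + g q false) := by
  rw [sum_pi_fun]
  exact Finset.prod_congr rfl fun q _ => Fintype.sum_bool _




open Finset in
/-- abstract distinct-YZ lemma: independent Bernoulli variables
`X i j` with success probabilities `x i j`; for each `i`, survival indicators
`Y i` and `Z i` driven by extra independent randomness (`A`- resp. `B`-valued,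
independent across `i` and of everything else), with `Y i * Z i ≤ X i (j i)`,
whose conditional expectations `π i`, `σ i` given the `X`-configuration are
non-increasing in the variables other than the fixed ones `X i' (j i')`, and
whose conditional expectations given the event `𝓧 = {∀ i, X i (j i) = 1}` are
at least `c`.  Then `E[∏ i, Y i * Z i] ≥ c^(2n) * ∏ i, x i (j i)`. -/
theorem stmt16 (n m : ℕ) (x : Fin n → Fin m → ℝ)
    (hx0 : ∀ i j, 0 ≤ x i j) (hx1 : ∀ i j, x i j ≤ 1)
    (j : Fin n → Fin m) (hjdist : Function.Injective j)
    (c : ℝ) (hc0 : 0 ≤ c) (hc1 : c ≤ 1)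
    (A B : Type) [Fintype A] [Fintype B]
    (wA : A → ℝ) (hwA0 : ∀ a, 0 ≤ wA a) (hwA1 : ∑ a, wA a = 1)
    (wB : B → ℝ) (hwB0 : ∀ b, 0 ≤ wB b) (hwB1 : ∑ b, wB b = 1)
    (Y : Fin n → (Fin n → Fin m → Bool) → A → Bool)
    (Z : Fin n → (Fin n → Fin m → Bool) → B → Bool)
    -- (a): `Y i * Z i ≤ X i (j i)`
    (hYZle : ∀ i X a b, (Y i X a && Z i X b) ≤ X i (j i))
    -- conditional expectations of `Y i`, `Z i` given the configuration `X`
    (π σ : Fin n → (Fin n → Fin m → Bool) → ℝ)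
    (hπ : ∀ i X, π i X = ∑ a, wA a * (if Y i X a then (1 : ℝ) else 0))
    (hσ : ∀ i X, σ i X = ∑ b, wB b * (if Z i X b then (1 : ℝ) else 0))
    -- (b): on configurations where every `X i' (j i') = 1`, `π i` and `σ i` are
    -- non-increasing functions of the remaining variables
    (hπmono : ∀ i (X X' : Fin n → Fin m → Bool),
      (∀ i', X i' (j i') = true) → (∀ i', X' i' (j i') = true) →
      (∀ p q, X p q ≤ X' p q) → π i X' ≤ π i X)
    (hσmono : ∀ i (X X' : Fin n → Fin m → Bool),
      (∀ i', X i' (j i') = true) → (∀ i', X' i' (j i') = true) →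
      (∀ p q, X p q ≤ X' p q) → σ i X' ≤ σ i X)
    -- (c): `E[Y i ∣ 𝓧] ≥ c` and `E[Z i ∣ 𝓧] ≥ c`, written as
    -- `E[π i · 1_𝓧] ≥ c · P(𝓧)` (and similarly for `σ i`), where
    -- `P(𝓧) = ∏ i, x i (j i)`.
    (hπc : ∀ i,
      c * ∏ i', x i' (j i') ≤
        ∑ X ∈ Finset.univ.filter (fun X : Fin n → Fin m → Bool => ∀ i', X i' (j i') = true),
          (∏ p, ∏ q, if X p q then x p q else 1 - x p q) * π i X)
    (hσc : ∀ i,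
      c * ∏ i', x i' (j i') ≤
        ∑ X ∈ Finset.univ.filter (fun X : Fin n → Fin m → Bool => ∀ i', X i' (j i') = true),
          (∏ p, ∏ q, if X p q then x p q else 1 - x p q) * σ i X) :
    c ^ (2 * n) * ∏ i, x i (j i) ≤
      ∑ X : Fin n → Fin m → Bool, ∑ α : Fin n → A, ∑ β : Fin n → B,
        ((∏ p, ∏ q, if X p q then x p q else 1 - x p q) *
          (∏ i, wA (α i)) * (∏ i, wB (β i))) *
          ∏ i, (if Y i X (α i) then (1 : ℝ) else 0) * (if Z i X (β i) then (1 : ℝ) else 0) := by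
  classical
  set w : (Fin n → Fin m → Bool) → ℝ :=
    fun X => ∏ p, ∏ q, if X p q then x p q else 1 - x p q with hwdef
  set T : ℝ := ∏ i, x i (j i) with hTdef
  have he0 : ∀ p q (b : Bool), (0:ℝ) ≤ if b then x p q else 1 - x p q := by
    intro p q b; cases b
    · simpa using sub_nonneg.mpr (hx1 p q)
    · simpa using hx0 p q
  have hw0 : ∀ X, 0 ≤ w X := fun X =>
    Finset.prod_nonneg fun p _ => Finset.prod_nonneg fun q _ => he0 p q _
  have hT0 : 0 ≤ T := Finset.prod_nonneg fun i _ => hx0 i (j i)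
  -- nonnegativity of the RHS
  have hRnn : (0:ℝ) ≤
      ∑ X : Fin n → Fin m → Bool, ∑ α : Fin n → A, ∑ β : Fin n → B,
        (w X * (∏ i, wA (α i)) * (∏ i, wB (β i))) *
          ∏ i, (if Y i X (α i) then (1 : ℝ) else 0) * (if Z i X (β i) then (1 : ℝ) else 0) := by
    refine Finset.sum_nonneg fun X _ => Finset.sum_nonneg fun α _ =>
      Finset.sum_nonneg fun β _ => ?_
    have h1 : (0:ℝ) ≤ w X * (∏ i, wA (α i)) * (∏ i, wB (β i)) :=
      mul_nonneg (mul_nonneg (hw0 X) (Finset.prod_nonneg fun i _ => hwA0 _))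
        (Finset.prod_nonneg fun i _ => hwB0 _)
    refine mul_nonneg h1 (Finset.prod_nonneg fun i _ => mul_nonneg ?_ ?_) <;> positivity
  rcases eq_or_lt_of_le hT0 with hTz | hTpos
  · calc c ^ (2 * n) * T = 0 := by rw [← hTz, mul_zero]
      _ ≤ _ := hRnn
  -- the measure restricted to the event
  set μ : (Fin n → Fin m → Bool) → ℝ :=
    fun X => if (∀ i', X i' (j i') = true) then w X else 0 with hμdef
  have hμ0 : ∀ X, 0 ≤ μ X := by
    intro X; rw [hμdef]; dsimp only; split_ifs; exacts [hw0 X, le_refl 0]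
  have hwmul : ∀ a b : Fin n → Fin m → Bool, w a * w b = w (a ⊓ b) * w (a ⊔ b) := by
    intro a b
    have expand : ∀ (a b : Fin n → Fin m → Bool), w a * w b =
        ∏ p, ∏ q, ((if a p q then x p q else 1 - x p q) * (if b p q then x p q else 1 - x p q)) := by
      intro a b
      rw [hwdef]; dsimp only
      rw [← Finset.prod_mul_distrib]
      exact Finset.prod_congr rfl fun p _ => (Finset.prod_mul_distrib).symm
    rw [expand, expand]
    refine Finset.prod_congr rfl fun p _ => Finset.prod_congr rfl fun q _ => ?_
    simp only [Pi.inf_apply, Pi.sup_apply]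
    exact bool_weight_mul (a p q) (b p q) (x p q) (1 - x p q)
  have hPinf : ∀ a b : Fin n → Fin m → Bool, (∀ i', a i' (j i') = true) →
      (∀ i', b i' (j i') = true) → ∀ i', (a ⊓ b) i' (j i') = true := by
    intro a b ha hb i'
    have h : (a ⊓ b) i' (j i') = a i' (j i') ⊓ b i' (j i') := rfl
    rw [h, ha i', hb i']; rfl
  have hPsup : ∀ a b : Fin n → Fin m → Bool, (∀ i', a i' (j i') = true) →
      (∀ i', b i' (j i') = true) → ∀ i', (a ⊔ b) i' (j i') = true := by
    intro a b ha hb i'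
    have h : (a ⊔ b) i' (j i') = a i' (j i') ⊔ b i' (j i') := rfl
    rw [h, ha i', hb i']; rfl
  have hμmul : ∀ a b : Fin n → Fin m → Bool, μ a * μ b ≤ μ (a ⊓ b) * μ (a ⊔ b) := by
    intro a b
    by_cases ha : ∀ i', a i' (j i') = true
    · by_cases hb : ∀ i', b i' (j i') = true
      · rw [hμdef]; dsimp only
        rw [if_pos ha, if_pos hb, if_pos (hPinf a b ha hb), if_pos (hPsup a b ha hb)]
        exact le_of_eq (hwmul a b)
      · have : μ b = 0 := by rw [hμdef]; dsimp only; rw [if_neg hb]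
        rw [this, mul_zero]
        exact mul_nonneg (hμ0 _) (hμ0 _)
    · have : μ a = 0 := by rw [hμdef]; dsimp only; rw [if_neg ha]
      rw [this, zero_mul]
      exact mul_nonneg (hμ0 _) (hμ0 _)
  -- total mass of μ is T
  have hμsum : ∑ X : Fin n → Fin m → Bool, μ X = T := by
    have step1 : ∀ X : Fin n → Fin m → Bool, μ X =
        ∏ p, ((∏ q, if X p q then x p q else 1 - x p q) *
          (if X p (j p) = true then (1:ℝ) else 0)) := by
      intro X
      rw [Finset.prod_mul_distrib, Finset.prod_boole]
      by_cases hX : ∀ i', X i' (j i') = true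
      · rw [if_pos (show ∀ i ∈ Finset.univ, X i (j i) = true from fun i _ => hX i), mul_one,
          hμdef]
        dsimp only
        rw [if_pos hX, hwdef]
      · rw [if_neg (fun h => hX fun i => h i (Finset.mem_univ i)), mul_zero, hμdef]
        dsimp only
        rw [if_neg hX]
    calc ∑ X : Fin n → Fin m → Bool, μ X
        = ∑ X : Fin n → Fin m → Bool, ∏ p, ((∏ q, if X p q then x p q else 1 - x p q) *
            (if X p (j p) = true then (1:ℝ) else 0)) := Finset.sum_congr rfl fun X _ => step1 X
      _ = ∏ p, ∑ v : Fin m → Bool, ((∏ q, if v q then x p q else 1 - x p q) *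
            (if v (j p) = true then (1:ℝ) else 0)) :=
          sum_pi_fun (κ := Fin n) (A := Fin m → Bool)
            (fun (p : Fin n) (v : Fin m → Bool) => (∏ q, if v q then x p q else 1 - x p q) *
            (if v (j p) = true then (1:ℝ) else 0))
      _ = T := by
          rw [hTdef]
          refine Finset.prod_congr rfl fun p _ => ?_
          have regroup : ∀ v : Fin m → Bool,
              (∏ q, if v q then x p q else 1 - x p q) * (if v (j p) = true then (1:ℝ) else 0) =
              ∏ q, ((if v q then x p q else 1 - x p q) *
                (if q = j p then (if v q then (1:ℝ) else 0) else 1)) := by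
            intro v
            rw [Finset.prod_mul_distrib, Finset.prod_ite_eq' Finset.univ (j p)
              (fun q => if v q then (1:ℝ) else 0), if_pos (Finset.mem_univ _)]
          calc ∑ v : Fin m → Bool, (∏ q, if v q then x p q else 1 - x p q) *
                (if v (j p) = true then (1:ℝ) else 0)
              = ∑ v : Fin m → Bool, ∏ q, ((if v q then x p q else 1 - x p q) *
                  (if q = j p then (if v q then (1:ℝ) else 0) else 1)) :=
                Finset.sum_congr rfl fun v _ => regroup v
            _ = ∏ q, (((if (true:Bool) then x p q else 1 - x p q) *
                  (if q = j p then (if (true:Bool) then (1:ℝ) else 0) else 1)) +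
                  ((if (false:Bool) then x p q else 1 - x p q) *
                  (if q = j p then (if (false:Bool) then (1:ℝ) else 0) else 1))) :=
                sum_pi_bool (κ := Fin m) (fun (q : Fin m) (b : Bool) =>
                  ((if b then x p q else 1 - x p q) *
                    (if q = j p then (if b then (1:ℝ) else 0) else 1)))
            _ = ∏ q, (if q = j p then x p q else 1) := by
                refine Finset.prod_congr rfl fun q _ => ?_
                by_cases hq : q = j p <;> simp [hq] <;> ring
            _ = x p (j p) := by
                rw [Finset.prod_ite_eq' Finset.univ (j p) (fun q => x p q),
                  if_pos (Finset.mem_univ _)]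
  -- rewrite the RHS as ∑ X, μ X * ∏ i, π i X * σ i X
  have hR : (∑ X : Fin n → Fin m → Bool, ∑ α : Fin n → A, ∑ β : Fin n → B,
        (w X * (∏ i, wA (α i)) * (∏ i, wB (β i))) *
          ∏ i, (if Y i X (α i) then (1 : ℝ) else 0) * (if Z i X (β i) then (1 : ℝ) else 0))
      = ∑ X : Fin n → Fin m → Bool, μ X * ∏ i, π i X * σ i X := by
    refine Finset.sum_congr rfl fun X _ => ?_
    by_cases hX : ∀ i', X i' (j i') = true
    · have hα : ∑ α : Fin n → A, ∏ i, (wA (α i) * (if Y i X (α i) then (1:ℝ) else 0))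
          = ∏ i, π i X := by
        rw [sum_pi_fun (κ := Fin n) (A := A) (fun (i : Fin n) (a : A) =>
          wA a * (if Y i X a then (1:ℝ) else 0))]
        exact Finset.prod_congr rfl fun i _ => (hπ i X).symm
      have hβ : ∑ β : Fin n → B, ∏ i, (wB (β i) * (if Z i X (β i) then (1:ℝ) else 0))
          = ∏ i, σ i X := by
        rw [sum_pi_fun (κ := Fin n) (A := B) (fun (i : Fin n) (b : B) =>
          wB b * (if Z i X b then (1:ℝ) else 0))]
        exact Finset.prod_congr rfl fun i _ => (hσ i X).symm
      have hμX : μ X = w X := by rw [hμdef]; dsimp only; rw [if_pos hX]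
      rw [hμX, Finset.prod_mul_distrib, ← hα, ← hβ, Finset.sum_mul_sum, Finset.mul_sum]
      refine Finset.sum_congr rfl fun α _ => ?_
      rw [Finset.mul_sum]
      refine Finset.sum_congr rfl fun β _ => ?_
      rw [Finset.prod_mul_distrib, Finset.prod_mul_distrib, Finset.prod_mul_distrib]
      ring
    · have hμX : μ X = 0 := by rw [hμdef]; dsimp only; rw [if_neg hX]
      rw [hμX, zero_mul]
      obtain ⟨i0, hi0⟩ := not_forall.mp hX
      have hfalse : X i0 (j i0) = false := by
        cases h : X i0 (j i0)
        · rfl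
        · exact absurd h hi0
      refine Finset.sum_eq_zero fun α _ => Finset.sum_eq_zero fun β _ => ?_
      have hzero : (if Y i0 X (α i0) then (1:ℝ) else 0) * (if Z i0 X (β i0) then (1:ℝ) else 0)
          = 0 := by
        have h := hYZle i0 X (α i0) (β i0)
        rw [hfalse] at h
        cases hY : Y i0 X (α i0) with
        | false => simp
        | true =>
          cases hZ : Z i0 X (β i0) with
          | false => simp
          | true => rw [hY, hZ] at h; exact absurd h (by decide)
      rw [Finset.prod_eq_zero (f := fun i => (if Y i X (α i) then (1:ℝ) else 0) *
        (if Z i X (β i) then (1:ℝ) else 0)) (Finset.mem_univ i0) hzero, mul_zero]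
  rw [hR]
  -- monotone repair map
  set fixX : (Fin n → Fin m → Bool) → (Fin n → Fin m → Bool) :=
    fun X p q => X p q || decide (q = j p) with hfixdef
  have hfixP : ∀ X i', fixX X i' (j i') = true := by
    intro X i'; rw [hfixdef]; simp
  have hfixid : ∀ X : Fin n → Fin m → Bool, (∀ i', X i' (j i') = true) → fixX X = X := by
    intro X hX; funext p q
    by_cases hq : q = j p
    · subst hq; rw [hfixdef]; simp [hX p]
    · rw [hfixdef]; simp [hq]
  have hfixmono : ∀ (X X' : Fin n → Fin m → Bool), X ≤ X' → fixX X ≤ fixX X' := by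
    intro X X' h p q
    have h1 := h p q
    rw [hfixdef]; dsimp only
    cases hd : decide (q = j p) <;> cases hx : X p q <;> cases hx' : X' p q <;> simp_all
  -- the 2n functions
  set f : Bool × Fin n → (Fin n → Fin m → Bool) → ℝ :=
    fun k X => cond k.1 (σ k.2 (fixX X)) (π k.2 (fixX X)) with hfdef
  have hfeval_f : ∀ i X, f (false, i) X = π i (fixX X) := fun i X => by rw [hfdef]; rfl
  have hfeval_t : ∀ i X, f (true, i) X = σ i (fixX X) := fun i X => by rw [hfdef]; rfl
  have hf0 : ∀ k X, 0 ≤ f k X := by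
    rintro ⟨b, i⟩ X
    cases b
    · rw [hfeval_f, hπ]
      exact Finset.sum_nonneg fun a _ => mul_nonneg (hwA0 a) (by positivity)
    · rw [hfeval_t, hσ]
      exact Finset.sum_nonneg fun b _ => mul_nonneg (hwB0 b) (by positivity)
  have hfa : ∀ k, Antitone (f k) := by
    rintro ⟨b, i⟩ X X' hle
    cases b
    · rw [hfeval_f, hfeval_f]
      exact hπmono i (fixX X) (fixX X') (hfixP X) (hfixP X')
        (fun p q => hfixmono X X' hle p q)
    · rw [hfeval_t, hfeval_t]
      exact hσmono i (fixX X) (fixX X') (hfixP X) (hfixP X')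
        (fun p q => hfixmono X X' hle p q)
  have hrestr : ∀ g : Fin n → (Fin n → Fin m → Bool) → ℝ, ∀ i,
      (∑ X ∈ Finset.univ.filter (fun X : Fin n → Fin m → Bool => ∀ i', X i' (j i') = true),
        (∏ p, ∏ q, if X p q then x p q else 1 - x p q) * g i X)
      = ∑ X : Fin n → Fin m → Bool, μ X * g i (fixX X) := by
    intro g i
    rw [Finset.sum_filter]
    refine Finset.sum_congr rfl fun X _ => ?_
    by_cases hX : ∀ i', X i' (j i') = true
    · rw [if_pos hX, hfixid X hX]
      have hμX : μ X = w X := by rw [hμdef]; dsimp only; rw [if_pos hX]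
      rw [hμX, hwdef]
    · rw [if_neg hX]
      have hμX : μ X = 0 := by rw [hμdef]; dsimp only; rw [if_neg hX]
      rw [hμX, zero_mul]
  have hfc : ∀ k, c * T ≤ ∑ X : Fin n → Fin m → Bool, μ X * f k X := by
    rintro ⟨b, i⟩
    cases b
    · have h := hπc i
      rw [hrestr π i] at h
      refine h.trans (le_of_eq (Finset.sum_congr rfl fun X _ => ?_))
      rw [hfeval_f]
    · have h := hσc i
      rw [hrestr σ i] at h
      refine h.trans (le_of_eq (Finset.sum_congr rfl fun X _ => ?_))
      rw [hfeval_t]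
  have main := fkg_prod μ hμ0 hμmul T c hμsum hTpos hc0 f hf0 hfa hfc Finset.univ
  have hcard : (Finset.univ : Finset (Bool × Fin n)).card = 2 * n := by
    rw [Finset.card_univ, Fintype.card_prod, Fintype.card_bool, Fintype.card_fin]
  rw [hcard] at main
  refine le_trans main (le_of_eq (Finset.sum_congr rfl fun X _ => ?_))
  by_cases hX : ∀ i', X i' (j i') = true
  · congr 1
    rw [Fintype.prod_prod_type, Fintype.prod_bool]
    simp only [hfeval_f, hfeval_t, hfixid X hX]
    rw [← Finset.prod_mul_distrib]
    exact Finset.prod_congr rfl fun i _ => (mul_comm _ _)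
  · have hμX : μ X = 0 := by rw [hμdef]; dsimp only; rw [if_neg hX]
    rw [hμX, zero_mul, zero_mul]
end
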